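/- Let A ∈ ℝ^{m×n}, b ∈ ℝ^m, λ > 0, and let x ∈ ℝ^n be a point where the slack s(x) := Ax − b has all entries strictly positive. Write S_x := diag(s(x)), A_x := S_x⁻¹A, and define ψ(x) ∈ ℝ^m by ψ_i(x) := [A_x(A_xᵀA_x + λI)⁻¹A_xᵀ]_{ii}. Then the function f(x) := ½·log det(AᵀS_x⁻²A + λI) is differentiable at x with gradient ∇f(x) = −A_xᵀψ(x). -/

import Mathlib

open Matrix

/-- The slack-rescaled constraint matrix `A_x = S_x⁻¹ A` where `S_x = diag(Ax − b)`. -/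
noncomputable def Amat {m n : ℕ} (A : Matrix (Fin m) (Fin n) ℝ) (b : Fin m → ℝ)
    (y : Fin n → ℝ) : Matrix (Fin m) (Fin n) ℝ :=
  (Matrix.diagonal (A.mulVec y - b))⁻¹ * A

/-- The regularized leverage scores `ψᵢ(x) = [A_x(A_xᵀA_x + λI)⁻¹A_xᵀ]_{ii}`. -/
noncomputable def psiReg {m n : ℕ} (A : Matrix (Fin m) (Fin n) ℝ) (b : Fin m → ℝ)
    (lam : ℝ) (y : Fin n → ℝ) : Fin m → ℝ :=
  fun i =>
    (Amat A b y *
      ((Amat A b y)ᵀ * Amat A b y + lam • (1 : Matrix (Fin n) (Fin n) ℝ))⁻¹ *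
      (Amat A b y)ᵀ) i i

/-- The regularized volumetric barrier `f(x) = ½ log det(AᵀS_x⁻²A + λI)`. -/
noncomputable def volBarrier {m n : ℕ} (A : Matrix (Fin m) (Fin n) ℝ) (b : Fin m → ℝ)
    (lam : ℝ) (y : Fin n → ℝ) : ℝ :=
  (1 / 2) *
    Real.log (((Amat A b y)ᵀ * Amat A b y + lam • (1 : Matrix (Fin n) (Fin n) ℝ)).det)

/-!
Jacobi's formula `d log det M = tr(M⁻¹ dM)` does all the work. Near a strictly feasible point
`A_yᵀA_y + λI = Aᵀ diag(w) A + λI =: G(w)` with weights `wᵢ = sᵢ⁻²`, and `G` is affine in `w`,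
so `∂ log det G / ∂wᵢ = (A G⁻¹ Aᵀ)ᵢᵢ = ψᵢ / wᵢ`. The chain rule with `dwᵢ = -2 sᵢ⁻³ (A dy)ᵢ`
then gives `d f = -∑ᵢ ψᵢ sᵢ⁻¹ (A dy)ᵢ = -⟨A_xᵀψ, dy⟩`.
-/

-- Matrices carry the entrywise sup norm; only derivatives are at stake, so any norm would do.
attribute [local instance] Matrix.normedAddCommGroup Matrix.normedSpace

namespace Matrix

variable {ι : Type*} [Fintype ι] [DecidableEq ι]

theorem det_updateRow_eq_sum_mul_adjugate {R : Type*} [CommRing R] (M : Matrix ι ι R) (k : ι)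
    (r : ι → R) : (M.updateRow k r).det = ∑ l, r l * M.adjugate l k := by
  rw [← cramer_transpose_apply, cramer_eq_adjugate_mulVec, ← adjugate_transpose]
  simp [mulVec, dotProduct, mul_comm]

noncomputable def detContinuousMultilinearMap :
    ContinuousMultilinearMap ℝ (fun _ : ι => ι → ℝ) ℝ :=
  { (detRowAlternating : (ι → ℝ) [⋀^ι]→ₗ[ℝ] ℝ).toMultilinearMap with
    cont := continuous_id.matrix_det }

theorem hasFDerivAt_det (M : Matrix ι ι ℝ) :
    HasFDerivAt det
      (traceLinearMap ι ℝ ℝ ∘ₗ LinearMap.mulRight ℝ M.adjugate).toContinuousLinearMap M := by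
  refine (detContinuousMultilinearMap.hasFDerivAt M).congr_fderiv ?_
  refine ContinuousLinearMap.ext fun H : Matrix ι ι ℝ => ?_
  refine (ContinuousMultilinearMap.linearDeriv_apply _ _ _).trans ?_
  change ∑ k, (M.updateRow k (H k)).det = trace (H * M.adjugate)
  simp only [trace, diag_apply, mul_apply, det_updateRow_eq_sum_mul_adjugate]

theorem hasFDerivAt_log_det {M : Matrix ι ι ℝ} (hM : M.det ≠ 0) :
    HasFDerivAt (fun N : Matrix ι ι ℝ => Real.log N.det)
      (traceLinearMap ι ℝ ℝ ∘ₗ LinearMap.mulRight ℝ M⁻¹).toContinuousLinearMap M := by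
  refine ((hasFDerivAt_det M).log hM).congr_fderiv ?_
  refine ContinuousLinearMap.ext fun H => ?_
  change M.det⁻¹ * trace (H * M.adjugate) = trace (H * M⁻¹)
  rw [inv_def, Ring.inverse_eq_inv', Matrix.mul_smul, trace_smul, smul_eq_mul]

theorem trace_mul_diagonal_mul {m n R : Type*} [Fintype m] [Fintype n] [DecidableEq m]
    [CommSemiring R] (B : Matrix n m R) (d : m → R) (C : Matrix m n R) :
    trace (B * diagonal d * C) = ∑ i, d i * (C * B) i i := by
  rw [trace_mul_cycle]
  simp [trace, mul_diagonal, mul_comm]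

theorem hasFDerivAt_log_det_transpose_mul_diagonal_mul_add {m n : Type*} [Fintype m] [Fintype n]
    [DecidableEq m] [DecidableEq n] (A : Matrix m n ℝ) (lam : ℝ) {w : m → ℝ}
    (hw : (Aᵀ * diagonal w * A + lam • (1 : Matrix n n ℝ)).det ≠ 0) :
    HasFDerivAt (fun v => Real.log (Aᵀ * diagonal v * A + lam • (1 : Matrix n n ℝ)).det)
      (∑ i, (A * (Aᵀ * diagonal w * A + lam • (1 : Matrix n n ℝ))⁻¹ * Aᵀ) i i •
        (ContinuousLinearMap.proj i : (m → ℝ) →L[ℝ] ℝ)) w := by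
  let L : (m → ℝ) →ₗ[ℝ] Matrix n n ℝ :=
    { toFun := fun v => Aᵀ * diagonal v * A
      map_add' := fun u v => by rw [← Matrix.add_mul, ← Matrix.mul_add, diagonal_add]; rfl
      map_smul' := fun c v => by rw [diagonal_smul, Matrix.mul_smul, Matrix.smul_mul]; rfl }
  have hL : HasFDerivAt (fun v => Aᵀ * diagonal v * A + lam • (1 : Matrix n n ℝ))
      L.toContinuousLinearMap w :=
    L.toContinuousLinearMap.hasFDerivAt.add_const _
  refine ((hasFDerivAt_log_det hw).comp w hL).congr_fderiv ?_
  refine ContinuousLinearMap.ext fun h => ?_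
  change trace (Aᵀ * diagonal h * A * _) = _
  rw [Matrix.mul_assoc _ A, trace_mul_diagonal_mul]
  simp [Matrix.mul_assoc, mul_comm]

theorem posDef_transpose_mul_self_add_smul_one {m n : Type*} [Fintype m] [Fintype n]
    [DecidableEq n] (B : Matrix m n ℝ) {lam : ℝ} (hlam : 0 < lam) :
    (Bᵀ * B + lam • (1 : Matrix n n ℝ)).PosDef :=
  PosDef.posSemidef_add (posSemidef_conjTranspose_mul_self B) (PosDef.one.smul hlam)

end Matrix

noncomputable def slackWeights {m n : ℕ} (A : Matrix (Fin m) (Fin n) ℝ) (b : Fin m → ℝ)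
    (y : Fin n → ℝ) : Fin m → ℝ :=
  fun i => ((A *ᵥ y - b) i ^ 2)⁻¹

section Barrier

variable {m n : ℕ} (A : Matrix (Fin m) (Fin n) ℝ) (b : Fin m → ℝ)

theorem Amat_eq_diagonal_mul {y : Fin n → ℝ} (hy : ∀ i, (A *ᵥ y - b) i ≠ 0) :
    Amat A b y = diagonal (fun i => ((A *ᵥ y - b) i)⁻¹) * A := by
  rw [Amat, inv_eq_left_inv]
  rw [diagonal_mul_diagonal, ← diagonal_one]
  exact congrArg diagonal (funext fun i => inv_mul_cancel₀ (hy i))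

theorem transpose_Amat_mul_Amat {y : Fin n → ℝ} (hy : ∀ i, (A *ᵥ y - b) i ≠ 0) :
    (Amat A b y)ᵀ * Amat A b y = Aᵀ * diagonal (slackWeights A b y) * A := by
  rw [Amat_eq_diagonal_mul A b hy, transpose_mul, diagonal_transpose, Matrix.mul_assoc,
    ← Matrix.mul_assoc (diagonal _), diagonal_mul_diagonal, ← Matrix.mul_assoc]
  congr 3
  funext i
  simp [slackWeights, sq]

theorem psiReg_eq {y : Fin n → ℝ} (hy : ∀ i, (A *ᵥ y - b) i ≠ 0) (lam : ℝ) (i : Fin m) :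
    psiReg A b lam y i = slackWeights A b y i *
      (A * (Aᵀ * diagonal (slackWeights A b y) * A + lam • (1 : Matrix (Fin n) (Fin n) ℝ))⁻¹ *
        Aᵀ) i i := by
  rw [psiReg, transpose_Amat_mul_Amat A b hy, Amat_eq_diagonal_mul A b hy, transpose_mul,
    diagonal_transpose, ← Matrix.mul_assoc, Matrix.mul_assoc (diagonal _) A,
    Matrix.mul_assoc (diagonal _) (A * _) Aᵀ, mul_diagonal, diagonal_mul, slackWeights]
  ring

theorem volBarrier_eventuallyEq {x : Fin n → ℝ} (hx : ∀ i, (A *ᵥ x - b) i ≠ 0) (lam : ℝ) :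
    volBarrier A b lam =ᶠ[nhds x] fun y => (1 / 2) * Real.log
      (Aᵀ * diagonal (slackWeights A b y) * A + lam • (1 : Matrix (Fin n) (Fin n) ℝ)).det := by
  have hslack : ∀ᶠ y in nhds x, ∀ i, (A *ᵥ y - b) i ≠ 0 := by
    refine Filter.eventually_all.2 fun i => ?_
    have hcont : Continuous fun y => (A *ᵥ y - b) i := by fun_prop
    exact hcont.continuousAt.eventually_ne (hx i)
  filter_upwards [hslack] with y hy
  rw [volBarrier, transpose_Amat_mul_Amat A b hy]

theorem hasFDerivAt_slackWeights {x : Fin n → ℝ} (hx : ∀ i, (A *ᵥ x - b) i ≠ 0) :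
    HasFDerivAt (slackWeights A b)
      (mulVecLin (diagonal (fun i => -2 * ((A *ᵥ x - b) i ^ 3)⁻¹) * A)).toContinuousLinearMap
      x := by
  have hslack : HasFDerivAt (fun y => A *ᵥ y - b) (mulVecLin A).toContinuousLinearMap x :=
    (mulVecLin A).toContinuousLinearMap.hasFDerivAt.sub_const b
  refine hasFDerivAt_pi'.2 fun i => ?_
  have hinvSq := (hasDerivAt_inv (pow_ne_zero 2 (hx i))).comp_hasFDerivAt x
    ((hasFDerivAt_pi'.1 hslack i).pow 2)
  refine hinvSq.congr_fderiv (ContinuousLinearMap.ext fun h => ?_)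
  simp only [_root_.smul_apply, ContinuousLinearMap.comp_apply, smul_eq_mul,
    LinearMap.coe_toContinuousLinearMap', ContinuousLinearMap.proj_apply, ← mulVec_mulVec,
    mulVecLin_apply, mulVec_diagonal, nsmul_eq_mul, Nat.cast_ofNat, Nat.add_one_sub_one, pow_one]
  field_simp [hx i]

end Barrier

/-- Gradient of the regularized volumetric barrier: at a strictly feasible point `x`,
`f(x) = ½ log det(AᵀS_x⁻²A + λI)` is differentiable with `∇f(x) = −A_xᵀψ(x)`. -/
theorem stmt16 (m n : ℕ) (A : Matrix (Fin m) (Fin n) ℝ) (b : Fin m → ℝ)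
    (lam : ℝ) (hlam : 0 < lam)
    (x : Fin n → ℝ) (hx : ∀ i, 0 < (A.mulVec x - b) i) :
    HasFDerivAt (volBarrier A b lam)
      (∑ i : Fin n,
        (-((Amat A b x)ᵀ.mulVec (psiReg A b lam x)) i) •
          (ContinuousLinearMap.proj i : (Fin n → ℝ) →L[ℝ] ℝ)) x := by
  have hslack : ∀ i, (A *ᵥ x - b) i ≠ 0 := fun i => (hx i).ne'
  have hdet :
      (Aᵀ * diagonal (slackWeights A b x) * A + lam • (1 : Matrix (Fin n) (Fin n) ℝ)).det ≠ 0 := by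
    rw [← transpose_Amat_mul_Amat A b hslack]
    exact ((Amat A b x).posDef_transpose_mul_self_add_smul_one hlam).det_pos.ne'
  have hf := (((hasFDerivAt_log_det_transpose_mul_diagonal_mul_add A lam hdet).comp x
    (hasFDerivAt_slackWeights A b hslack)).const_mul (1 / 2)).congr_of_eventuallyEq
    (volBarrier_eventuallyEq A b hslack lam)
  refine hf.congr_fderiv (ContinuousLinearMap.ext fun h => ?_)
  have hgrad : ∀ v : Fin n → ℝ,
      (∑ j, -v j • (ContinuousLinearMap.proj j : (Fin n → ℝ) →L[ℝ] ℝ)) h = -(v ⬝ᵥ h) := by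
    intro v; simp [dotProduct]
  rw [hgrad, mulVec_transpose, ← dotProduct_mulVec, Amat_eq_diagonal_mul A b hslack]
  simp only [_root_.smul_apply, ContinuousLinearMap.comp_apply,
    LinearMap.coe_toContinuousLinearMap', mulVecLin_apply, ← mulVec_mulVec, _root_.sum_apply,
    ContinuousLinearMap.proj_apply, mulVec_diagonal, smul_eq_mul, dotProduct, Finset.mul_sum,
    ← Finset.sum_neg_distrib]
  refine Finset.sum_congr rfl fun i _ => ?_
  rw [psiReg_eq A b hslack, slackWeights]
  field_simp
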